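/- If an n-gon is strictly convex with vertices z_1, ..., z_n numbered counterclockwise around its boundary, then the vertices are arranged in a counterclockwise star formation about their centroid; in particular the centroid lies in the interior of the polygon. -/

import Mathlib

/-!
Strict convexity puts every vertex weakly, and the vertex two steps ahead strictly, to the left of
each edge; averaging, the centroid `c` lies strictly to the left of every edge. Hence each ray
`c → z (i+1)` is obtained from `c → z i` by a counterclockwise turn through an angle in `(0, π)`,
and since the rays close up, these angles add up to a positive multiple of `2π`. Follow the
cumulative angle measured from the ray through `z 0`. If it reached `2π` before the last step, say
between `z j` and `z (j+1)`, then `z 0`, lying strictly left of the edge `z j → z (j+1)`, would be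
in the triangle `c z j z (j+1)` with a positive weight on `c`; but `c`, `z j`, `z (j+1)` all lie
left of the edge `z 0 → z 1`, and `c` strictly. So the total is less than `3π`, hence `2π`.

The centroid is an average of the vertices with positive weights, and three consecutive vertices
already span the plane affinely, so the centroid is an interior point of the convex hull.
-/

open Complex

/-- The centroid of `n` points in the complex plane. -/
noncomputable def centroid (n : ℕ) (z : Fin n → ℂ) : ℂ := (∑ i, z i) / n

/-- The `n`-gon with distinct vertices `z 0, …, z (n-1)`, numbered counterclockwise,
is strictly convex: every vertex lies strictly to the left of every directed edge
`z i → z (i+1)`. -/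
def StrictlyConvexCCW (n : ℕ) [NeZero n] (z : Fin n → ℂ) : Prop :=
  (∀ i j : Fin n, i ≠ j → z i ≠ z j) ∧
  ∀ i j : Fin n, j ≠ i → j ≠ i + 1 →
    0 < ((starRingEnd ℂ) (z (i + 1) - z i) * (z j - z i)).im

/-- Counterclockwise star formation about the centroid. -/
noncomputable def StarFormation (n : ℕ) [NeZero n] (z : Fin n → ℂ) : Prop :=
  ∃ α : Fin n → ℝ,
    (∀ i, z i ≠ centroid n z) ∧ (∀ i, 0 < α i) ∧ (∑ i, α i) = 2 * Real.pi ∧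
    ∀ i, z (i + 1) - centroid n z =
      ((‖z (i + 1) - centroid n z‖ / ‖z i - centroid n z‖ : ℝ) : ℂ) *
        Complex.exp ((α i : ℂ) * Complex.I) * (z i - centroid n z)

open scoped Real Topology

lemma Real.eq_two_pi_of_cos_eq_one {θ : ℝ} (h : Real.cos θ = 1) (h0 : 0 < θ) (h4 : θ < 4 * π) :
    θ = 2 * π := by
  obtain ⟨k, rfl⟩ := (Real.cos_eq_one_iff θ).1 h
  have hk0 : (0 : ℤ) < k := by exact_mod_cast pos_of_mul_pos_left h0 Real.two_pi_pos.le
  have hk2 : k < 2 := by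
    exact_mod_cast ((mul_lt_mul_iff_left₀ Real.two_pi_pos).1 (by linarith) : (k : ℝ) < 2)
  obtain rfl : k = 1 := by omega
  simp

theorem sum_smul_mem_interior_convexHull {ι E : Type*} [Fintype ι] [NormedAddCommGroup E]
    [NormedSpace ℝ E] [FiniteDimensional ℝ E] {p : ι → E} (hp : affineSpan ℝ (Set.range p) = ⊤)
    {w : ι → ℝ} (hw : ∀ i, 0 < w i) (hw₁ : ∑ i, w i = 1) :
    ∑ i, w i • p i ∈ interior (convexHull ℝ (Set.range p)) := by
  classical
  set x := ∑ i, w i • p i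
  set H := convexHull ℝ (Set.range p)
  obtain ⟨y, hy⟩ := interior_convexHull_nonempty_iff_affineSpan_eq_top.2 hp
  obtain ⟨t, htw, ht⟩ : ∃ t, (∀ i, t < w i) ∧ 0 < t :=
    ((Filter.eventually_all.2 fun i => eventually_lt_nhds (hw i)).filter_mono
      nhdsWithin_le_nhds |>.and self_mem_nhdsWithin).exists (f := 𝓝[>] 0)
  -- As all weights of `x` exceed `t`, the homothety of ratio `-t` about `x` maps `H` into `H`;
  -- so `x` lies strictly between the interior point `y` and the image of `y`.
  have hreflect : H ⊆ {h | x + t • (x - h) ∈ H} := by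
    refine convexHull_min ?_ ?_
    · rintro _ ⟨j, rfl⟩
      refine mem_convexHull_of_exists_fintype (fun i => (1 + t) * w i - t * if i = j then 1 else 0)
        p (fun i => ?_) ?_ Set.mem_range_self ?_
      · split_ifs <;> nlinarith [hw i, htw i]
      · simp [Finset.sum_sub_distrib, ← Finset.mul_sum, hw₁]
      · simp [x, sub_smul, Finset.sum_sub_distrib, mul_smul, ← Finset.smul_sum]
        module
    · intro a ha b hb u v hu hv huv
      have : x + t • (x - (u • a + v • b)) = u • (x + t • (x - a)) + v • (x + t • (x - b)) := by
        linear_combination (norm := module) -(huv • ((1 + t) • x))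
      simpa only [Set.mem_ofPred_eq, this] using (convex_convexHull ℝ _) ha hb hu hv huv
  have hcombo := (convex_convexHull ℝ _).combo_interior_self_mem_interior hy
    (hreflect (interior_subset hy)) (a := t / (1 + t)) (b := 1 / (1 + t)) (by positivity)
    (by positivity) (by field_simp; ring)
  convert hcombo using 1
  match_scalars <;> field_simp
  ring

namespace Complex

-- The determinant of `u` and `v`, in the form in which it appears in `StrictlyConvexCCW`.
def cross (u v : ℂ) : ℝ := ((starRingEnd ℂ) u * v).im

lemma cross_def (u v : ℂ) : cross u v = u.re * v.im - u.im * v.re := by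
  simp only [cross, mul_im, conj_re, conj_im]
  ring

lemma cross_self (u : ℂ) : cross u u = 0 := by
  rw [cross_def]
  ring

lemma cross_swap (u v : ℂ) : cross v u = -cross u v := by
  simp only [cross_def]
  ring

lemma cross_sub_sub (a b c : ℂ) : cross (a - c) (b - c) = cross (b - a) (c - a) := by
  simp only [cross_def, sub_re, sub_im]
  ring

lemma cross_ofReal_mul_right (u w : ℂ) (r : ℝ) : cross u (r * w) = r * cross u w := by
  simp only [cross_def, re_ofReal_mul, im_ofReal_mul]
  ring

lemma cross_sum_right {ι : Type*} (s : Finset ι) (u : ℂ) (v : ι → ℂ) :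
    cross u (∑ i ∈ s, v i) = ∑ i ∈ s, cross u (v i) := by
  simp only [cross, Finset.mul_sum, im_sum]

lemma cross_smul_eq_add (u v w : ℂ) : cross u v • w = cross w v • u + cross u w • v := by
  apply Complex.ext <;> simp [cross_def, real_smul] <;> ring

lemma cross_eq_normSq_mul_im_div (u v : ℂ) : cross u v = normSq u * (v / u).im := by
  rcases eq_or_ne u 0 with rfl | hu
  · simp [cross]
  · have : v / u = (starRingEnd ℂ) u * v * ((normSq u)⁻¹ : ℝ) := by
      rw [div_eq_mul_inv, inv_def]
      push_cast
      ring
    rw [this, im_mul_ofReal, ← cross]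
    field_simp [(normSq_pos.2 hu).ne']

lemma cross_ofReal_mul_exp_mul (u : ℂ) (r θ : ℝ) :
    cross u (r * exp (θ * I) * u) = r * normSq u * Real.sin θ := by
  simp only [cross_def, mul_re, mul_im, ofReal_re, ofReal_im, exp_ofReal_mul_I_re,
    exp_ofReal_mul_I_im, normSq_apply]
  ring

lemma im_div_pos_of_cross_pos {u v : ℂ} (h : 0 < cross u v) : 0 < (v / u).im := by
  rw [cross_eq_normSq_mul_im_div] at h
  exact pos_of_mul_pos_right h (normSq_nonneg u)

lemma arg_div_pos_of_cross_pos {u v : ℂ} (h : 0 < cross u v) : 0 < arg (v / u) :=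
  (arg_nonneg_iff.2 (im_div_pos_of_cross_pos h).le).lt_of_ne
    fun h0 => (im_div_pos_of_cross_pos h).ne' (arg_eq_zero_iff.1 h0.symm).2

lemma arg_div_lt_pi_of_cross_pos {u v : ℂ} (h : 0 < cross u v) : arg (v / u) < π :=
  arg_lt_pi_iff.2 (Or.inr (im_div_pos_of_cross_pos h).ne')

lemma eq_ofReal_mul_exp_arg_div_mul {u : ℂ} (hu : u ≠ 0) (v : ℂ) :
    v = ((‖v‖ / ‖u‖ : ℝ) : ℂ) * exp (arg (v / u) * I) * u := by
  rw [← norm_div, norm_mul_exp_arg_mul_I, div_mul_cancel₀ _ hu]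

/-- If `p`, strictly left of `x → y`, were in the closed sector at `c` from `x` to `y`, it would be
in the triangle `c x y` with a positive weight on `c`, and so strictly left of any line `p → q`
having `x` and `y` weakly and `c` strictly on its left. -/
lemma not_cross_nonneg_and_cross_nonneg {c p q x y : ℂ} (hp : 0 < cross (y - x) (p - x))
    (hc : 0 < cross (q - p) (c - p)) (hx : 0 ≤ cross (q - p) (x - p))
    (hy : 0 ≤ cross (q - p) (y - p)) :
    ¬(0 ≤ cross (x - c) (p - c) ∧ 0 ≤ cross (p - c) (y - c)) := by
  rintro ⟨hxp, hpy⟩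
  have key : cross (p - c) (y - c) * cross (q - p) (x - p)
      + cross (x - c) (p - c) * cross (q - p) (y - p)
      + cross (y - x) (p - x) * cross (q - p) (c - p) = 0 := by
    simp only [cross_def, sub_re, sub_im]
    ring
  linarith [mul_nonneg hpy hx, mul_nonneg hxp hy, mul_pos hp hc]

lemma affineSpan_eq_top_of_cross_ne_zero {s : Set ℂ} {a b c : ℂ} (ha : a ∈ s) (hb : b ∈ s)
    (hc : c ∈ s) (h : cross (b - a) (c - a) ≠ 0) : affineSpan ℝ s = ⊤ := by
  rw [AffineSubspace.affineSpan_eq_top_iff_vectorSpan_eq_top_of_nonempty ℝ ℂ ℂ ⟨a, ha⟩,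
    eq_top_iff]
  intro w _
  have hw : w = (cross (b - a) (c - a))⁻¹ •
      (cross w (c - a) • (b - a) + cross (b - a) w • (c - a)) := by
    rw [← cross_smul_eq_add, inv_smul_smul₀ h]
  rw [hw]
  exact Submodule.smul_mem _ _ (add_mem (Submodule.smul_mem _ _ (vsub_mem_vectorSpan ℝ hb ha))
    (Submodule.smul_mem _ _ (vsub_mem_vectorSpan ℝ hc ha)))

lemma cross_eq_norm_mul_norm_mul_sin {u v : ℂ} {θ : ℝ} (hu : u ≠ 0)
    (h : v / u = ‖v / u‖ * exp (θ * I)) : cross u v = ‖u‖ * ‖v‖ * Real.sin θ := by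
  have hv : v = ((‖v / u‖ : ℝ) : ℂ) * exp (θ * I) * u := by rw [← h, div_mul_cancel₀ _ hu]
  conv_lhs => rw [hv]
  rw [cross_ofReal_mul_exp_mul, norm_div, normSq_eq_norm_sq]
  field_simp

lemma div_eq_norm_mul_exp_sum_arg {W : ℕ → ℂ} (hW : ∀ j, W j ≠ 0) (j : ℕ) :
    W j / W 0 = ‖W j / W 0‖ * exp ((∑ i ∈ Finset.range j, arg (W (i + 1) / W i) : ℝ) * I) := by
  induction j with
  | zero => simp [hW 0]
  | succ j ih =>
    rw [← div_mul_div_cancel₀ (hW j), norm_mul, Finset.sum_range_succ, ofReal_add, add_mul,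
      exp_add]
    conv_lhs => rw [← norm_mul_exp_arg_mul_I (W (j + 1) / W j), ih]
    push_cast
    ring

-- Passing `2π` at step `j + 1 < m` would put `W 0` in the sector from `W j` to `W (j + 1)`.
theorem sum_range_arg_div_lt_two_pi {W : ℕ → ℂ} {m : ℕ}
    (hturn : ∀ j, 0 < cross (W j) (W (j + 1)))
    (honce : ∀ j, 0 < j → j + 1 < m → ¬(0 ≤ cross (W j) (W 0) ∧ 0 ≤ cross (W 0) (W (j + 1))))
    {j : ℕ} (hj : j < m) : ∑ i ∈ Finset.range j, arg (W (i + 1) / W i) < 2 * π := by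
  have hW j : W j ≠ 0 := fun h => by simpa [h, cross] using hturn j
  have hltπ j : arg (W (j + 1) / W j) < π := arg_div_lt_pi_of_cross_pos (hturn j)
  set b : ℕ → ℝ := fun j => ∑ i ∈ Finset.range j, arg (W (i + 1) / W i)
  have hb_succ (j : ℕ) : b (j + 1) = b j + arg (W (j + 1) / W j) := Finset.sum_range_succ _ _
  have hsin (j : ℕ) : cross (W 0) (W j) = ‖W 0‖ * ‖W j‖ * Real.sin (b j) :=
    cross_eq_norm_mul_norm_mul_sin (hW 0) (div_eq_norm_mul_exp_sum_arg hW j)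
  induction j with
  | zero =>
    simp only [Finset.range_zero, Finset.sum_empty]
    positivity
  | succ j ih =>
    rcases Nat.eq_zero_or_pos j with rfl | hj0
    · simpa [b] using (hltπ 0).trans (by linarith [Real.pi_pos])
    by_contra! hge
    have hlt : b (j + 1) < b j + π := by rw [hb_succ]; linarith [hltπ j]
    have hbj : b j < 2 * π := ih (by omega)
    refine honce j hj0 hj ⟨?_, ?_⟩
    · have : Real.sin (b j) < 0 := by
        rw [← Real.sin_sub_two_pi]
        exact Real.sin_neg_of_neg_of_neg_pi_lt (by linarith) (by linarith)
      rw [cross_swap, hsin, neg_nonneg]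
      exact mul_nonpos_of_nonneg_of_nonpos (by positivity) this.le
    · have : 0 ≤ Real.sin (b (j + 1)) := by
        rw [← Real.sin_sub_two_pi]
        exact Real.sin_nonneg_of_nonneg_of_le_pi (by linarith) (by linarith)
      rw [hsin]
      positivity

open Fin.NatCast in
theorem sum_arg_div_eq_two_pi {n : ℕ} [NeZero n] {V : Fin n → ℂ}
    (hturn : ∀ i, 0 < cross (V i) (V (i + 1)))
    (honce : ∀ j, j ≠ 0 → j + 1 ≠ 0 → ¬(0 ≤ cross (V j) (V 0) ∧ 0 ≤ cross (V 0) (V (j + 1)))) :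
    ∑ i, arg (V (i + 1) / V i) = 2 * π := by
  set W : ℕ → ℂ := fun j => V j
  have hWturn j : 0 < cross (W j) (W (j + 1)) := by simpa [W] using hturn j
  have hW j : W j ≠ 0 := fun h => by simpa [h, cross] using hWturn j
  have hWonce j (hj0 : 0 < j) (hj : j + 1 < n) :
      ¬(0 ≤ cross (W j) (W 0) ∧ 0 ≤ cross (W 0) (W (j + 1))) := by
    have hne (k : ℕ) (hk0 : 0 < k) (hk : k < n) : (k : Fin n) ≠ 0 :=
      Fin.natCast_eq_zero.not.2 (Nat.not_dvd_of_pos_of_lt hk0 hk)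
    simpa [W] using honce j (hne j hj0 (by omega)) (by simpa using hne (j + 1) (by omega) hj)
  have hsum : ∑ i, arg (V (i + 1) / V i) = ∑ i ∈ Finset.range n, arg (W (i + 1) / W i) := by
    simpa [W] using Fin.sum_univ_eq_sum_range (fun i : ℕ => arg (W (i + 1) / W i)) n
  have hcos : Real.cos (∑ i ∈ Finset.range n, arg (W (i + 1) / W i)) = 1 := by
    have h := congrArg re (div_eq_norm_mul_exp_sum_arg hW n)
    rwa [show W n = W 0 by simp [W], div_self (hW 0), norm_one, ofReal_one, one_mul,
      exp_ofReal_mul_I_re, one_re, eq_comm] at h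
  have hlast := Finset.sum_range_succ (fun i => arg (W (i + 1) / W i)) (n - 1)
  have hlastπ := arg_div_lt_pi_of_cross_pos (hWturn (n - 1))
  rw [Nat.sub_add_cancel NeZero.one_le] at hlast hlastπ
  rw [hsum]
  refine Real.eq_two_pi_of_cos_eq_one hcos
    (Finset.sum_pos (fun i _ => arg_div_pos_of_cross_pos (hWturn i)) (by simp [NeZero.ne n])) ?_
  linarith [sum_range_arg_div_lt_two_pi hWturn hWonce (Nat.sub_lt (NeZero.pos n) one_pos),
    Real.pi_pos]

end Complex

lemma natCast_mul_centroid_sub {n : ℕ} [NeZero n] (z : Fin n → ℂ) (a : ℂ) :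
    (n : ℂ) * (centroid n z - a) = ∑ i, (z i - a) := by
  rw [centroid, Finset.sum_sub_distrib, Finset.sum_const, Finset.card_univ, Fintype.card_fin,
    nsmul_eq_mul, mul_sub, mul_div_cancel₀ _ (Nat.cast_ne_zero.2 (NeZero.ne n))]

lemma centroid_eq_sum_smul {n : ℕ} (z : Fin n → ℂ) :
    centroid n z = ∑ i, (n : ℝ)⁻¹ • z i := by
  simp only [centroid, real_smul, ← Finset.mul_sum, ofReal_inv, ofReal_natCast, div_eq_inv_mul]

namespace StrictlyConvexCCW

variable {n : ℕ} [NeZero n] {z : Fin n → ℂ}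

lemma cross_nonneg (h : StrictlyConvexCCW n z) (i j : Fin n) :
    0 ≤ cross (z (i + 1) - z i) (z j - z i) := by
  by_cases hji : j = i
  · simp [hji, cross]
  by_cases hji₁ : j = i + 1
  · rw [hji₁, cross_self]
  exact (h.2 i j hji hji₁).le

lemma cross_add_one_add_one_pos (h : StrictlyConvexCCW n z) (hn : 3 ≤ n) (i : Fin n) :
    0 < cross (z (i + 1) - z i) (z (i + 1 + 1) - z i) := by
  have h1 : (1 : Fin n).val = 1 := by rw [Fin.val_one', Nat.mod_eq_of_lt (by omega)]
  refine h.2 i _ ?_ ?_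
  · rw [add_assoc, Ne, add_eq_left, Fin.ext_iff, Fin.val_add, h1, Fin.val_zero,
      Nat.mod_eq_of_lt (by omega)]
    omega
  · rw [Ne, add_eq_left, Fin.ext_iff, h1, Fin.val_zero]
    omega

lemma cross_centroid_pos (h : StrictlyConvexCCW n z) (hn : 3 ≤ n) (i : Fin n) :
    0 < cross (z (i + 1) - z i) (centroid n z - z i) := by
  have hsum : 0 < ∑ j, cross (z (i + 1) - z i) (z j - z i) :=
    Finset.sum_pos' (fun j _ => h.cross_nonneg i j)
      ⟨i + 1 + 1, Finset.mem_univ _, h.cross_add_one_add_one_pos hn i⟩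
  rw [← cross_sum_right, ← natCast_mul_centroid_sub, ← ofReal_natCast,
    cross_ofReal_mul_right] at hsum
  exact pos_of_mul_pos_right hsum (Nat.cast_nonneg n)

lemma not_cross_nonneg_and_cross_nonneg (h : StrictlyConvexCCW n z) (hn : 3 ≤ n) {j k : Fin n}
    (hkj : k ≠ j) (hkj₁ : k ≠ j + 1) :
    ¬(0 ≤ cross (z j - centroid n z) (z k - centroid n z) ∧
      0 ≤ cross (z k - centroid n z) (z (j + 1) - centroid n z)) :=
  Complex.not_cross_nonneg_and_cross_nonneg (h.2 j k hkj hkj₁) (h.cross_centroid_pos hn k)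
    (h.cross_nonneg k j) (h.cross_nonneg k (j + 1))

lemma affineSpan_eq_top (h : StrictlyConvexCCW n z) (hn : 3 ≤ n) :
    affineSpan ℝ (Set.range z) = ⊤ :=
  affineSpan_eq_top_of_cross_ne_zero (Set.mem_range_self 0) (Set.mem_range_self _)
    (Set.mem_range_self _) (h.cross_add_one_add_one_pos hn 0).ne'

end StrictlyConvexCCW

/-- If an `n`-gon is strictly convex with its vertices numbered counterclockwise, then
the vertices are in a counterclockwise star formation about their centroid; in particular
the centroid lies in the interior of the polygon (its convex hull). -/
theorem strictlyConvex_starFormation (n : ℕ) [NeZero n] (hn : 3 ≤ n)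
    (z : Fin n → ℂ) (hconv : StrictlyConvexCCW n z) :
    StarFormation n z ∧
      centroid n z ∈ interior (convexHull ℝ (Set.range z)) := by
  set c := centroid n z with hc
  have hturn i : 0 < cross (z i - c) (z (i + 1) - c) := by
    rw [cross_sub_sub]
    exact hconv.cross_centroid_pos hn i
  have hne i : z i - c ≠ 0 := fun h0 => by simpa [h0, cross] using hturn i
  refine ⟨⟨fun i => arg ((z (i + 1) - c) / (z i - c)), fun i => sub_ne_zero.1 (hne i),
    fun i => arg_div_pos_of_cross_pos (hturn i),
    sum_arg_div_eq_two_pi hturn fun j hj hj₁ =>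
      hconv.not_cross_nonneg_and_cross_nonneg hn hj.symm hj₁.symm,
    fun i => eq_ofReal_mul_exp_arg_div_mul (hne i) _⟩, ?_⟩
  rw [hc, centroid_eq_sum_smul]
  exact sum_smul_mem_interior_convexHull (hconv.affineSpan_eq_top hn) (fun _ => by positivity)
    (by simp [NeZero.ne n])
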